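/- Let V be a multi vector space over a finite-dimensional vector space X. If B is an M-basis for V and B* is any basis of X, then ∑_{x ∈ B*} C_V(x) ≤ ∑_{x ∈ B} C_V(x). -/

import Mathlib

/-!
Every nonzero vector has, by the M-basis property, count equal to the minimum of the counts of
the `b i` in its support, so it is bounded by the count of any single one of them. The supports
of the vectors of `b'` satisfy Hall's condition, since `k` independent vectors cannot lie in the
span of fewer than `k` basis vectors; hence each `b' j` can be matched to a distinct `b (f j)` in
its support, and `C (b' j) ≤ C (b (f j))` summed over `j` gives the claim.
-/

namespace Module.Basis

variable {R M ι : Type*}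

def IsMBasis {α : Type*} [Semiring R] [AddCommMonoid M] [Module R M]
    [SemilatticeInf α] (C : M → α) (b : Basis ι R M) : Prop :=
  ∀ (s : Finset ι) (hs : s.Nonempty) (a : ι → R), (∀ i ∈ s, a i ≠ 0) →
    C (∑ i ∈ s, a i • b i) = s.inf' hs (fun i => C (b i))

theorem IsMBasis.apply_le_of_mem_support_repr {α : Type*} [Semiring R] [AddCommMonoid M]
    [Module R M] [SemilatticeInf α] {C : M → α} {b : Basis ι R M} (hb : b.IsMBasis C)
    {x : M} {i : ι} (hi : i ∈ (b.repr x).support) : C x ≤ C (b i) := by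
  have hx : x = ∑ k ∈ (b.repr x).support, b.repr x k • b k := by
    conv_lhs => rw [← b.linearCombination_repr x]
    rfl
  rw [hx, hb _ ⟨i, hi⟩ _ fun k hk => Finsupp.mem_support_iff.mp hk]
  exact Finset.inf'_le _ hi

variable [Ring R] [StrongRankCondition R] [AddCommGroup M] [Module R M]

theorem card_le_card_biUnion_support_repr [DecidableEq ι] {κ : Type*} (b : Basis ι R M)
    {v : κ → M} (hv : LinearIndependent R v) (s : Finset κ) :
    s.card ≤ (s.biUnion fun j => (b.repr (v j)).support).card := by
  classical
  set U := s.biUnion fun j => (b.repr (v j)).support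
  have hspan :
      Set.range (fun j : s => v j) ≤ Submodule.span R ((U.image b : Finset M) : Set M) := by
    rintro _ ⟨j, rfl⟩
    refine Submodule.span_mono ?_ (b.mem_span_repr_support (v j))
    rintro _ ⟨i, hi, rfl⟩
    exact Finset.mem_image_of_mem b (Finset.mem_biUnion.mpr ⟨j, j.2, hi⟩)
  calc s.card = Fintype.card s := (Fintype.card_coe s).symm
    _ ≤ Fintype.card ((U.image b : Finset M) : Set M) :=
        linearIndependent_le_span_aux' _ (hv.comp _ Subtype.val_injective) _ hspan
    _ = (U.image b).card := Fintype.card_coe _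
    _ ≤ U.card := Finset.card_image_le

theorem exists_injective_mem_support_repr {κ : Type*} (b : Basis ι R M) {v : κ → M}
    (hv : LinearIndependent R v) :
    ∃ f : κ → ι, Function.Injective f ∧ ∀ j, f j ∈ (b.repr (v j)).support := by
  classical
  exact (Finset.all_card_le_biUnion_card_iff_exists_injective _).mp
    (b.card_le_card_biUnion_support_repr hv)

end Module.Basis

theorem mvs_Mbasis_sum_max_general
    {K X ι ι' : Type*} [Field K] [AddCommGroup X] [Module K X]
    [Fintype ι] [Fintype ι']
    (C : X → ℕ)
    (b : Module.Basis ι K X)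
    (hM : ∀ (s : Finset ι) (hs : s.Nonempty) (a : ι → K), (∀ i ∈ s, a i ≠ 0) →
      C (∑ i ∈ s, a i • b i) = s.inf' hs (fun i => C (b i)))
    (b' : Module.Basis ι' K X) :
    ∑ j, C (b' j) ≤ ∑ i, C (b i) := by
  classical
  have hb : b.IsMBasis C := hM
  obtain ⟨f, hf, hf_mem⟩ := b.exists_injective_mem_support_repr b'.linearIndependent
  calc ∑ j, C (b' j) ≤ ∑ j, C (b (f j)) :=
        Finset.sum_le_sum fun j _ => hb.apply_le_of_mem_support_repr (hf_mem j)
    _ = ∑ i ∈ Finset.univ.image f, C (b i) :=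
        (Finset.sum_image (f := fun i => C (b i)) fun _ _ _ _ h => hf h).symm
    _ ≤ ∑ i, C (b i) := Finset.sum_le_sum_of_subset (Finset.subset_univ _)

/-- sums of counts over any basis are dominated by the sum over an M-basis. -/
theorem mvs_Mbasis_sum_max
    {K X ι ι' : Type*} [Field K] [AddCommGroup X] [Module K X] [FiniteDimensional K X]
    [Fintype ι] [Fintype ι']
    (C : X → ℕ)
    (hadd : ∀ x y : X, min (C x) (C y) ≤ C (x + y))
    (hsmul : ∀ (a : K) (x : X), C x ≤ C (a • x))
    (b : Module.Basis ι K X)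
    (hM : ∀ (s : Finset ι) (hs : s.Nonempty) (a : ι → K), (∀ i ∈ s, a i ≠ 0) →
      C (∑ i ∈ s, a i • b i) = s.inf' hs (fun i => C (b i)))
    (b' : Module.Basis ι' K X) :
    ∑ j, C (b' j) ≤ ∑ i, C (b i) :=
  mvs_Mbasis_sum_max_general C b hM b'
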